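/- (Proposition 4.) Successive dressings erase both gauge symmetries: let A be a gauge potential on U and u, u' : U → GL(n, ℝ) smooth dressing fields. Then for every smooth γ : U → GL(n, ℝ) such that the first dressing transforms as u ↦ γ⁻¹u and the second is invariant, u' ↦ u', one has ((A^γ)^{γ⁻¹u})^{u'} = (A^u)^{u'}; and for every smooth γ' : U → GL(n, ℝ) such that u ↦ γ'⁻¹uγ' and u' ↦ γ'⁻¹u', one has ((A^{γ'})^{γ'⁻¹uγ'})^{γ'⁻¹u'} = (A^u)^{u'}. Hence the doubly dressed potential (A^u)^{u'} is invariant under both types of gauge transformations. -/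

import Mathlib

noncomputable section

open Matrix

attribute [local instance]
  Matrix.linftyOpNormedAddCommGroup Matrix.linftyOpNormedRing Matrix.linftyOpNormedAlgebra

instance instNormedAddCommGroupCLMFinMatrix {m n : ℕ} :
    NormedAddCommGroup ((Fin m → ℝ) →L[ℝ] Matrix (Fin n) (Fin n) ℝ) :=
  ContinuousLinearMap.toNormedAddCommGroup

instance instNormedSpaceCLMFinMatrix {m n : ℕ} :
    NormedSpace ℝ ((Fin m → ℝ) →L[ℝ] Matrix (Fin n) (Fin n) ℝ) :=
  ContinuousLinearMap.toNormedSpace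

/-- The gauge transform `A^γ` (also used for the dressing operation `A^u`) of a gauge
potential `A` by a `GL(n,ℝ)`-valued map `γ`:
`A^γ(x)(v) = γ(x)⁻¹ ⬝ A(x)(v) ⬝ γ(x) + γ(x)⁻¹ ⬝ (fderiv γ x v)`. -/
def gaugeTransform {m n : ℕ}
    (A : (Fin m → ℝ) → ((Fin m → ℝ) →L[ℝ] Matrix (Fin n) (Fin n) ℝ))
    (γ : (Fin m → ℝ) → (Matrix (Fin n) (Fin n) ℝ)ˣ) :
    (Fin m → ℝ) → ((Fin m → ℝ) →L[ℝ] Matrix (Fin n) (Fin n) ℝ) := fun x =>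
  ((ContinuousLinearMap.mul ℝ (Matrix (Fin n) (Fin n) ℝ) (((γ x)⁻¹ : (Matrix (Fin n) (Fin n) ℝ)ˣ) : Matrix (Fin n) (Fin n) ℝ)).comp
      (((ContinuousLinearMap.mul ℝ (Matrix (Fin n) (Fin n) ℝ)).flip ((γ x : Matrix (Fin n) (Fin n) ℝ))).comp (A x))) +
  (ContinuousLinearMap.mul ℝ (Matrix (Fin n) (Fin n) ℝ) (((γ x)⁻¹ : (Matrix (Fin n) (Fin n) ℝ)ˣ) : Matrix (Fin n) (Fin n) ℝ)).comp
      (fderiv ℝ (fun y => (γ y : Matrix (Fin n) (Fin n) ℝ)) x)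

variable {m n : ℕ}

local notation "M" => Matrix (Fin n) (Fin n) ℝ

lemma gaugeTransform_congr_point
    (A B : (Fin m → ℝ) → ((Fin m → ℝ) →L[ℝ] M))
    (γ : (Fin m → ℝ) → Mˣ) {x : Fin m → ℝ} (h : A x = B x) :
    gaugeTransform A γ x = gaugeTransform B γ x := by
  simp only [gaugeTransform, h]
  rfl

lemma differentiableAt_inv_coe (γ : (Fin m → ℝ) → Mˣ) {x : Fin m → ℝ}
    (hγ : DifferentiableAt ℝ (fun y => (γ y : M)) x) :
    DifferentiableAt ℝ (fun y => (((γ y)⁻¹ : Mˣ) : M)) x := by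
  have h := hγ.inverse (γ x).isUnit
  have : (fun y => Ring.inverse ((γ y : M))) = fun y => (((γ y)⁻¹ : Mˣ) : M) := by
    funext y; simp [Ring.inverse_unit]
  rwa [this] at h

lemma gaugeTransform_comp
    (A : (Fin m → ℝ) → ((Fin m → ℝ) →L[ℝ] M))
    (γ δ : (Fin m → ℝ) → Mˣ) {x : Fin m → ℝ}
    (hγ : DifferentiableAt ℝ (fun y => (γ y : M)) x)
    (hδ : DifferentiableAt ℝ (fun y => (δ y : M)) x) :
    gaugeTransform (gaugeTransform A γ) δ x
      = gaugeTransform A (fun y => γ y * δ y) x := by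
  have hd : fderiv ℝ (fun y => ((γ y : M)) * ((δ y : M))) x
      = (γ x : M) • fderiv ℝ (fun y => (δ y : M)) x
        + (fderiv ℝ (fun y => (γ y : M)) x).smulRight (δ x : M) :=
    fderiv_mul' hγ hδ
  ext v : 1
  change (((δ x)⁻¹ : Mˣ) : M) * (((((γ x)⁻¹ : Mˣ) : M) * (A x v * (γ x : M)) + (((γ x)⁻¹ : Mˣ) : M) * fderiv ℝ (fun y => (γ y : M)) x v) * (δ x : M)) + (((δ x)⁻¹ : Mˣ) : M) * fderiv ℝ (fun y => (δ y : M)) x v = (((γ x * δ x)⁻¹ : Mˣ) : M) * (A x v * ((γ x * δ x : Mˣ) : M)) + (((γ x * δ x)⁻¹ : Mˣ) : M) * fderiv ℝ (fun y => ((γ y * δ y : Mˣ) : M)) x v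
  simp only [gaugeTransform, ContinuousLinearMap.add_apply, ContinuousLinearMap.comp_apply,
    ContinuousLinearMap.mul_apply', ContinuousLinearMap.flip_apply, hd,
    ContinuousLinearMap.smulRight_apply, ContinuousLinearMap.smul_apply, smul_eq_mul,
    Units.val_mul, _root_.mul_inv_rev]
  simp only [mul_add, add_mul, mul_assoc, Units.inv_mul_cancel_left, add_assoc, add_comm, add_left_comm]


/-- Proposition 4: successive dressings erase both gauge symmetries.
For every `γ` under which `u ↦ γ⁻¹u` and `u' ↦ u'`, one has
`((A^γ)^{γ⁻¹u})^{u'} = (A^u)^{u'}`; and for every `γ'` under which `u ↦ γ'⁻¹uγ'` and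
`u' ↦ γ'⁻¹u'`, one has `((A^{γ'})^{γ'⁻¹uγ'})^{γ'⁻¹u'} = (A^u)^{u'}`.
Hence the doubly dressed potential `(A^u)^{u'}` is invariant under both types of gauge
transformations. -/
theorem successive_dressings_erase_gauge_symmetries {m n : ℕ}
    (U : Set (Fin m → ℝ)) (hU : IsOpen U)
    (A : (Fin m → ℝ) → ((Fin m → ℝ) →L[ℝ] Matrix (Fin n) (Fin n) ℝ))
    (u u' : (Fin m → ℝ) → (Matrix (Fin n) (Fin n) ℝ)ˣ)
    (hA : ContDiffOn ℝ (⊤ : ℕ∞) A U)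
    (hu : ContDiffOn ℝ (⊤ : ℕ∞) (fun x => (u x : Matrix (Fin n) (Fin n) ℝ)) U)
    (hu' : ContDiffOn ℝ (⊤ : ℕ∞) (fun x => (u' x : Matrix (Fin n) (Fin n) ℝ)) U) :
    (∀ γ : (Fin m → ℝ) → (Matrix (Fin n) (Fin n) ℝ)ˣ,
      ContDiffOn ℝ (⊤ : ℕ∞) (fun x => (γ x : Matrix (Fin n) (Fin n) ℝ)) U →
      ∀ x ∈ U,
        gaugeTransform (gaugeTransform (gaugeTransform A γ) (fun y => (γ y)⁻¹ * u y)) u' x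
          = gaugeTransform (gaugeTransform A u) u' x) ∧
    (∀ γ' : (Fin m → ℝ) → (Matrix (Fin n) (Fin n) ℝ)ˣ,
      ContDiffOn ℝ (⊤ : ℕ∞) (fun x => (γ' x : Matrix (Fin n) (Fin n) ℝ)) U →
      ∀ x ∈ U,
        gaugeTransform
            (gaugeTransform (gaugeTransform A γ') (fun y => (γ' y)⁻¹ * u y * γ' y))
            (fun y => (γ' y)⁻¹ * u' y) x
          = gaugeTransform (gaugeTransform A u) u' x) := by
  constructor
  · intro γ hγ x hx
    have du : DifferentiableAt ℝ (fun y => (u y : Matrix (Fin n) (Fin n) ℝ)) x :=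
      (hu.contDiffAt (hU.mem_nhds hx)).differentiableAt (by simp)
    have dγ : DifferentiableAt ℝ (fun y => (γ y : Matrix (Fin n) (Fin n) ℝ)) x :=
      (hγ.contDiffAt (hU.mem_nhds hx)).differentiableAt (by simp)
    have dγi := differentiableAt_inv_coe γ dγ
    have dδ : DifferentiableAt ℝ
        (fun y => (((γ y)⁻¹ * u y : (Matrix (Fin n) (Fin n) ℝ)ˣ) : Matrix (Fin n) (Fin n) ℝ)) x := by
      have h := dγi.mul du
      simp only [Units.val_mul]
      exact h
    have h1 : gaugeTransform (gaugeTransform A γ) (fun y => (γ y)⁻¹ * u y) x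
        = gaugeTransform A u x := by
      rw [gaugeTransform_comp A γ _ dγ dδ]
      congr 1
      funext y
      group
    exact gaugeTransform_congr_point _ _ u' h1
  · intro γ' hγ' x hx
    have du : DifferentiableAt ℝ (fun y => (u y : Matrix (Fin n) (Fin n) ℝ)) x :=
      (hu.contDiffAt (hU.mem_nhds hx)).differentiableAt (by simp)
    have du' : DifferentiableAt ℝ (fun y => (u' y : Matrix (Fin n) (Fin n) ℝ)) x :=
      (hu'.contDiffAt (hU.mem_nhds hx)).differentiableAt (by simp)
    have dγ : DifferentiableAt ℝ (fun y => (γ' y : Matrix (Fin n) (Fin n) ℝ)) x :=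
      (hγ'.contDiffAt (hU.mem_nhds hx)).differentiableAt (by simp)
    have dγi := differentiableAt_inv_coe γ' dγ
    have dβ : DifferentiableAt ℝ
        (fun y => (((γ' y)⁻¹ * u y * γ' y : (Matrix (Fin n) (Fin n) ℝ)ˣ) : Matrix (Fin n) (Fin n) ℝ)) x := by
      have h := (dγi.mul du).mul dγ
      simp only [Units.val_mul]
      exact h
    have dδ' : DifferentiableAt ℝ
        (fun y => (((γ' y)⁻¹ * u' y : (Matrix (Fin n) (Fin n) ℝ)ˣ) : Matrix (Fin n) (Fin n) ℝ)) x := by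
      have h := dγi.mul du'
      simp only [Units.val_mul]
      exact h
    have duγ : DifferentiableAt ℝ
        (fun y => ((u y * γ' y : (Matrix (Fin n) (Fin n) ℝ)ˣ) : Matrix (Fin n) (Fin n) ℝ)) x := by
      have h := du.mul dγ
      simp only [Units.val_mul]
      exact h
    have h1 : gaugeTransform (gaugeTransform A γ') (fun y => (γ' y)⁻¹ * u y * γ' y) x
        = gaugeTransform A (fun y => u y * γ' y) x := by
      rw [gaugeTransform_comp A γ' _ dγ dβ]
      congr 1
      funext y
      group
    have h2 := gaugeTransform_congr_point _ _ (fun y => (γ' y)⁻¹ * u' y) h1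
    rw [h2, gaugeTransform_comp A (fun y => u y * γ' y) _ duγ dδ',
      gaugeTransform_comp A u u' du du']
    congr 1
    funext y
    group
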